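/- arXiv:1501.06092 — 2 statements merged into one kernel-verified Lean document; each statement's English description precedes it below -/
import Mathlib

section
/- Let A₀ generate a strongly continuous group (e^{A₀ t}) on a Banach space X and let B ∈ L(X). If the evolution system U(t,s) for A(t) = A₀ + e^{A₀ t} B e^{-A₀ t} on D(A₀) exists, then U(t,0) = e^{A₀ t} e^{B t}, and consequently e^{B t} maps D(A₀) into D(A₀) for all t. -/
/-!
For `y ∈ D`, the interaction-picture vector `v t = e^{-A₀ t} U(t,0) y` solves `v' = B v`: in the
derivative of `e^{-A₀ σ} U(σ,0) y` the two `A₀`-terms cancel (the product rule is legitimate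
because a strongly continuous group is jointly continuous, by uniform boundedness). Uniqueness for
this bounded linear ODE gives `v t = e^{tB} y`, i.e. `U(t,0) = e^{A₀ t} e^{tB}` on the dense
domain `D`, hence everywhere. Finally `e^{tB} y = e^{-A₀ t} U(t,0) y` stays in `D`, which both
`U` and the group preserve.
-/

open Set Filter Topology

section StronglyContinuous

variable {𝕜 E F α : Type*} [NontriviallyNormedField 𝕜]
  [NormedAddCommGroup E] [NormedSpace 𝕜 E] [NormedAddCommGroup F] [NormedSpace 𝕜 F]

theorem IsCompact.exists_forall_opNorm_le_of_continuousOn_apply [TopologicalSpace α]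
    [CompleteSpace E] {G : α → E →L[𝕜] F} {K : Set α} (hK : IsCompact K)
    (hG : ∀ x, ContinuousOn (fun t => G t x) K) : ∃ M, ∀ t ∈ K, ‖G t‖ ≤ M := by
  obtain ⟨M, hM⟩ := banach_steinhaus (g := fun t : K => G t) fun x => by
    obtain ⟨C, hC⟩ := hK.exists_bound_of_continuousOn (hG x)
    exact ⟨C, fun t => hC t t.2⟩
  exact ⟨M, fun t ht => hM ⟨t, ht⟩⟩

theorem continuous_uncurry_of_continuous_apply [TopologicalSpace α] [WeaklyLocallyCompactSpace α]
    [CompleteSpace E] {G : α → E →L[𝕜] F} (hG : ∀ x, Continuous fun t => G t x) :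
    Continuous fun p : α × E => G p.1 p.2 := by
  refine continuous_iff_continuousAt.2 fun ⟨t₀, x₀⟩ => ?_
  obtain ⟨K, hK, hKt₀⟩ := exists_compact_mem_nhds t₀
  obtain ⟨M, hM⟩ := hK.exists_forall_opNorm_le_of_continuousOn_apply fun x => (hG x).continuousOn
  have hsmall : Tendsto (fun p : α × E => G p.1 (p.2 - x₀)) (𝓝 (t₀, x₀)) (𝓝 0) := by
    refine squeeze_zero_norm' (a := fun p => M * ‖p.2 - x₀‖) ?_ ?_
    · filter_upwards [continuousAt_fst.preimage_mem_nhds hKt₀] with p hp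
      exact (G p.1).le_of_opNorm_le (hM p.1 hp) _
    · simpa using ((continuous_snd.sub (continuous_const (y := x₀))).norm.const_mul M).tendsto
        (t₀, x₀)
  have horbit : Tendsto (fun p : α × E => G p.1 x₀) (𝓝 (t₀, x₀)) (𝓝 (G t₀ x₀)) :=
    ((hG x₀).comp continuous_fst).tendsto (t₀, x₀)
  simpa [ContinuousAt] using hsmall.add horbit

/-- A product rule needing differentiability of `L` only along the single vector `x τ`. -/
theorem HasDerivWithinAt.apply_of_continuous_uncurry {L : 𝕜 → E →L[𝕜] F} {x : 𝕜 → E}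
    {x' : E} {w : F} {s : Set 𝕜} {τ : 𝕜} (hL : Continuous fun p : 𝕜 × E => L p.1 p.2)
    (hx : HasDerivWithinAt x x' s τ) (hLx : HasDerivWithinAt (fun σ => L σ (x τ)) w s τ) :
    HasDerivWithinAt (fun σ => L σ (x σ)) (L τ x' + w) s τ := by
  have hincr : HasDerivWithinAt (fun σ => L σ (x σ - x τ)) (L τ x') s τ := by
    rw [hasDerivWithinAt_iff_tendsto_slope] at hx ⊢
    refine ((hL.tendsto (τ, x')).comp
      ((tendsto_nhdsWithin_of_tendsto_nhds tendsto_id).prodMk_nhds hx)).congr fun σ => ?_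
    simp [slope_def_module]
  convert hincr.add hLx using 1
  ext σ
  simp

end StronglyContinuous

section OperatorGroup

variable {𝕜 E : Type*} [NontriviallyNormedField 𝕜] [NormedAddCommGroup E] [NormedSpace 𝕜 E]
  {G : 𝕜 → E →L[𝕜] E}

theorem apply_neg_apply_of_map_add (h0 : G 0 = 1) (hadd : ∀ s t, G (s + t) = (G s).comp (G t))
    (t : 𝕜) (x : E) : G (-t) (G t x) = x := by
  simpa [h0] using congr($(hadd (-t) t) x).symm

theorem apply_apply_neg_of_map_add (h0 : G 0 = 1) (hadd : ∀ s t, G (s + t) = (G s).comp (G t))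
    (t : 𝕜) (x : E) : G t (G (-t) x) = x := by
  simpa using apply_neg_apply_of_map_add h0 hadd (-t) x

theorem hasDerivAt_apply_of_hasDerivAt_zero (hadd : ∀ s t, G (s + t) = (G s).comp (G t))
    {x v : E} (hx : HasDerivAt (fun t => G t x) v 0) (s : 𝕜) :
    HasDerivAt (fun t => G t x) (G s v) s := by
  have hshift : HasDerivAt (fun t => G s (G (t - s) x)) (G s v) s :=
    (G s).hasFDerivAt.comp_hasDerivAt s (HasDerivAt.comp_sub_const s s (by rwa [sub_self]))
  convert hshift using 1
  ext t
  simp [← ContinuousLinearMap.comp_apply, ← hadd]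

theorem hasDerivAt_apply_apply_zero (hadd : ∀ s t, G (s + t) = (G s).comp (G t))
    {x v : E} (hx : HasDerivAt (fun t => G t x) v 0) (s : 𝕜) :
    HasDerivAt (fun t => G t (G s x)) (G s v) 0 := by
  have hshift := HasDerivAt.comp_add_const 0 s
    (by rw [zero_add]; exact hasDerivAt_apply_of_hasDerivAt_zero hadd hx s)
  convert hshift using 1
  ext t
  simp [hadd]

end OperatorGroup

section RealOperatorGroup

variable {E : Type*} [NormedAddCommGroup E] [NormedSpace ℝ E] [CompleteSpace E]
  {G : ℝ → E →L[ℝ] E}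

theorem hasDerivAt_apply_intervalIntegral (hadd : ∀ s t, G (s + t) = (G s).comp (G t))
    (hG : ∀ x, Continuous fun t => G t x) (x : E) (e : ℝ) :
    HasDerivAt (fun t => G t (∫ s in (0 : ℝ)..e, G s x)) (G e x - G 0 x) 0 := by
  set F : ℝ → E := fun u => ∫ s in (0 : ℝ)..u, G s x
  have hF : ∀ u, HasDerivAt F (G u x) u := fun u =>
    ((hG x).integral_hasStrictDerivAt 0 u).hasDerivAt
  have hshift : HasDerivAt (fun t => F (t + e) - F t) (G e x - G 0 x) 0 :=
    (HasDerivAt.comp_add_const 0 e (by rw [zero_add]; exact hF e)).sub (hF 0)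
  convert hshift using 1
  ext t
  rw [← (G t).intervalIntegral_comp_comm ((hG x).intervalIntegrable 0 e)]
  simp_rw [← ContinuousLinearMap.comp_apply, ← hadd]
  rw [intervalIntegral.integral_comp_add_left (fun s => G s x), add_zero,
    intervalIntegral.integral_interval_sub_left ((hG x).intervalIntegrable _ _)
      ((hG x).intervalIntegrable _ _)]

theorem dense_setOf_hasDerivAt_apply_zero (h0 : G 0 = 1)
    (hadd : ∀ s t, G (s + t) = (G s).comp (G t)) (hG : ∀ x, Continuous fun t => G t x) :
    Dense {x : E | ∃ d, HasDerivAt (fun t => G t x) d 0} := by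
  intro x
  -- the averages `e⁻¹ • ∫ s in 0..e, G s x = slope F 0 e` lie in the domain and tend to `x`
  set F : ℝ → E := fun u => ∫ s in (0 : ℝ)..u, G s x
  have hslope : Tendsto (slope F 0) (𝓝[≠] 0) (𝓝 x) := by
    simpa [h0] using
      hasDerivAt_iff_tendsto_slope.1 ((hG x).integral_hasStrictDerivAt 0 0).hasDerivAt
  refine mem_closure_of_tendsto hslope (Eventually.of_forall fun e => ⟨e⁻¹ • (G e x - G 0 x), ?_⟩)
  simp only [slope_def_module, F, sub_zero, intervalIntegral.integral_same, map_smul]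
  exact (hasDerivAt_apply_intervalIntegral hadd hG x e).const_smul e⁻¹

theorem HasDerivWithinAt.apply_neg_of_hasDerivAt_zero
    (hadd : ∀ s t, G (s + t) = (G s).comp (G t)) (hG : ∀ x, Continuous fun t => G t x)
    {x : ℝ → E} {v f : E} {s : Set ℝ} {τ : ℝ} (hA : HasDerivAt (fun t => G t (x τ)) v 0)
    (hx : HasDerivWithinAt x (v + f) s τ) :
    HasDerivWithinAt (fun σ => G (-σ) (x σ)) (G (-τ) f) s τ := by
  have hGneg : Continuous fun p : ℝ × E => G (-p.1) p.2 :=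
    (continuous_uncurry_of_continuous_apply hG).comp (continuous_fst.neg.prodMk continuous_snd)
  have hGv := HasDerivAt.scomp τ (hasDerivAt_apply_of_hasDerivAt_zero hadd hA (-τ))
    (hasDerivAt_neg τ)
  convert hx.apply_of_continuous_uncurry hGneg hGv.hasDerivWithinAt using 1
  simp

end RealOperatorGroup

theorem eq_exp_smul_apply_of_hasDerivWithinAt {X : Type*} [NormedAddCommGroup X]
    [NormedSpace ℝ X] [CompleteSpace X] {B : X →L[ℝ] X} {v : ℝ → X} {a b : ℝ}
    (hv : ∀ t ∈ Icc a b, HasDerivWithinAt v (B (v t)) (Icc a b) t) :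
    ∀ t ∈ Icc a b, v t = NormedSpace.exp ((t - a) • B) (v a) := by
  have hexp : ∀ t, HasDerivAt (fun t => NormedSpace.exp ((t - a) • B) (v a))
      (B (NormedSpace.exp ((t - a) • B) (v a))) t := fun t => by
    simpa using (HasDerivAt.comp_sub_const t a (hasDerivAt_exp_smul_const' B (t - a))).clm_apply
      (hasDerivAt_const t (v a))
  exact ODE_solution_unique_of_mem_Icc_right (v := fun _ => B) (s := fun _ => univ) (K := ‖B‖₊)
    (fun _ _ => B.lipschitz.lipschitzOnWith) (fun t ht => (hv t ht).continuousWithinAt)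
    (fun t ht => (hv t (Ico_subset_Icc_self ht)).mono_of_mem_nhdsWithin (Icc_mem_nhdsGE_of_mem ht))
    (fun _ _ => mem_univ _) (fun t _ => (hexp t).continuousAt.continuousWithinAt)
    (fun t _ => (hexp t).hasDerivWithinAt) (fun _ _ => mem_univ _) (by simp)

theorem dyson_identity_for_conjugated_perturbation_general
    {X : Type*} [NormedAddCommGroup X] [NormedSpace ℝ X] [CompleteSpace X]
    (T : ℝ) (hT : 0 ≤ T)
    (G : ℝ → (X →L[ℝ] X))
    (hG0 : G 0 = 1)
    (hGadd : ∀ s t : ℝ, G (s + t) = (G s).comp (G t))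
    (hGsc : ∀ x : X, Continuous fun t => G t x)
    (D : Set X)
    (hD : D = {x : X | ∃ d : X, HasDerivAt (fun t => G t x) d 0})
    (A₀ : X → X)
    (hA₀ : ∀ x ∈ D, HasDerivAt (fun t => G t x) (A₀ x) 0)
    (B : X →L[ℝ] X)
    (U : ℝ → ℝ → (X →L[ℝ] X))
    (hid : ∀ s ∈ Icc 0 T, U s s = 1)
    (hinv : ∀ s ∈ Icc 0 T, ∀ t ∈ Icc 0 T, ∀ y ∈ D, U t s y ∈ D)
    (hsol : ∀ s ∈ Icc 0 T, ∀ y ∈ D, ∀ t ∈ Icc 0 T,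
      HasDerivWithinAt (fun τ => U τ s y)
        (A₀ (U t s y) + G t (B (G (-t) (U t s y)))) (Icc 0 T) t) :
    (∀ t ∈ Icc 0 T, U t 0 = (G t).comp (NormedSpace.exp (t • B))) ∧
    (∀ t ∈ Icc 0 T, ∀ y ∈ D, NormedSpace.exp (t • B) y ∈ D) := by
  have h0T : (0 : ℝ) ∈ Icc 0 T := ⟨le_rfl, hT⟩
  have hconj : ∀ y ∈ D, ∀ τ ∈ Icc 0 T, HasDerivWithinAt (fun σ => G (-σ) (U σ 0 y))
      (B (G (-τ) (U τ 0 y))) (Icc 0 T) τ := fun y hy τ hτ => by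
    simpa [apply_neg_apply_of_map_add hG0 hGadd] using
      (hsol 0 h0T y hy τ hτ).apply_neg_of_hasDerivAt_zero hGadd hGsc
        (hA₀ _ (hinv 0 h0T τ hτ y hy))
  have hdyson : ∀ y ∈ D, ∀ t ∈ Icc 0 T, U t 0 y = G t (NormedSpace.exp (t • B) y) := by
    intro y hy t ht
    have hv := eq_exp_smul_apply_of_hasDerivWithinAt (hconj y hy) t ht
    simp only [neg_zero, hG0, hid 0 h0T, one_apply_eq_self, sub_zero] at hv
    rw [← hv, apply_apply_neg_of_map_add hG0 hGadd]
  refine ⟨fun t ht => ?_, fun t ht y hy => ?_⟩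
  · refine ContinuousLinearMap.coeFn_injective <| Continuous.ext_on ?_ (U t 0).continuous
      ((G t).comp _).continuous fun y hy => hdyson y hy t ht
    exact hD ▸ dense_setOf_hasDerivAt_apply_zero hG0 hGadd hGsc
  · have hUD := hinv 0 h0T t ht y hy
    rw [hdyson y hy t ht] at hUD
    rw [hD] at hUD ⊢
    obtain ⟨d, hd⟩ := hUD
    exact ⟨_, by simpa [apply_neg_apply_of_map_add hG0 hGadd] using
      hasDerivAt_apply_apply_zero hGadd hd (-t)⟩

/-- Let `A₀` generate a strongly continuous group `(G t) = (e^{A₀ t})` on a Banach space `X`,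
with domain `D`, and let `B ∈ L(X)`.  If an evolution system `U t s` for
`A t = A₀ + e^{A₀ t} B e^{-A₀ t}` on `D` exists, then `U t 0 = e^{A₀ t} e^{B t}`, and
consequently `e^{B t}` maps `D` into `D` for all `t ∈ [0,T]`. -/
theorem dyson_identity_for_conjugated_perturbation
    {X : Type*} [NormedAddCommGroup X] [NormedSpace ℝ X] [CompleteSpace X]
    (T : ℝ) (hT : 0 ≤ T)
    (G : ℝ → (X →L[ℝ] X))
    (hG0 : G 0 = 1)
    (hGadd : ∀ s t : ℝ, G (s + t) = (G s).comp (G t))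
    (hGsc : ∀ x : X, Continuous fun t => G t x)
    (D : Set X)
    (hD : D = {x : X | ∃ d : X, HasDerivAt (fun t => G t x) d 0})
    (A₀ : X → X)
    (hA₀ : ∀ x ∈ D, HasDerivAt (fun t => G t x) (A₀ x) 0)
    (B : X →L[ℝ] X)
    (U : ℝ → ℝ → (X →L[ℝ] X))
    (hid : ∀ s ∈ Icc 0 T, U s s = 1)
    (hcoc : ∀ s ∈ Icc 0 T, ∀ r ∈ Icc 0 T, ∀ t ∈ Icc 0 T,
      (U t r).comp (U r s) = U t s)
    (hsc : ∀ x : X, ContinuousOn (fun p : ℝ × ℝ => U p.1 p.2 x) (Icc 0 T ×ˢ Icc 0 T))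
    (hinv : ∀ s ∈ Icc 0 T, ∀ t ∈ Icc 0 T, ∀ y ∈ D, U t s y ∈ D)
    (hsol : ∀ s ∈ Icc 0 T, ∀ y ∈ D, ∀ t ∈ Icc 0 T,
      HasDerivWithinAt (fun τ => U τ s y)
        (A₀ (U t s y) + G t (B (G (-t) (U t s y)))) (Icc 0 T) t)
    (hC1 : ∀ s ∈ Icc 0 T, ∀ y ∈ D,
      ContinuousOn (fun t => A₀ (U t s y) + G t (B (G (-t) (U t s y)))) (Icc 0 T)) :
    (∀ t ∈ Icc 0 T, U t 0 = (G t).comp (NormedSpace.exp (t • B))) ∧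
    (∀ t ∈ Icc 0 T, ∀ y ∈ D, NormedSpace.exp (t • B) y ∈ D) :=
  dyson_identity_for_conjugated_perturbation_general T hT G hG0 hGadd hGsc D hD A₀ hA₀ B U hid hinv
    hsol
end

section
/- The Weierstrass function g(ξ) = Σ_{n=1}^∞ 2^{-n} cos(2^n ξ) is nowhere differentiable on ℝ. -/
/-!
If `g` were differentiable at `x`, its symmetric second differences
`Δ_h = g (x + h) + g (x - h) - 2 g x` would be `o(h)`, and so would `L h = 64 Δ_h - 20 Δ_{2h} + Δ_{4h}`.
On `cos (a ·)` the operator `L` acts by the multiplier `2 cos (a x) K (a h)`, where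
`K θ = 8 (cos θ - 1)³ (cos θ + 3)` vanishes on `2πℤ` and is `O(θ⁶)` at `0`. For the step
`h = π / 2^(k+2)` all frequencies above `2^(k+2)` therefore drop out of `L h`, the top one contributes
`-256 cos (2^(k+2) x) / 2^(k+2)`, the next one at most `96 / 2^(k+2)`, and the sixth-order vanishing of
`K` makes all the lower ones together at most `8 / 2^(k+2)`. As `|cos θ| < 1/2` forces
`|cos 2θ| > 1/2`, arbitrarily large `k` have `|cos (2^(k+2) x)| ≥ 1/2`, and then `|L h| ≥ 24 / 2^(k+2) > |h|`.
-/

open Real Filter Asymptotics Topology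

section SecondDifference

variable {E : Type*} [NormedAddCommGroup E]

def secondDiff (f : ℝ → E) (x h : ℝ) : E := f (x + h) + f (x - h) - 2 • f x

theorem HasSum.secondDiff {ι : Type*} {F : ι → ℝ → E} {f : ℝ → E}
    (hF : ∀ y, HasSum (fun i => F i y) (f y)) (x h : ℝ) :
    HasSum (fun i => secondDiff (F i) x h) (secondDiff f x h) :=
  ((hF _).add (hF _)).sub ((hF x).const_smul 2)

theorem Asymptotics.IsLittleO.comp_const_mul {u : ℝ → E} (hu : u =o[𝓝 0] id) (c : ℝ) :
    (fun h => u (c * h)) =o[𝓝 0] id :=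
  (hu.comp_tendsto (continuous_const_mul c |>.tendsto' 0 0 (mul_zero c))).trans_isBigO
    (isBigO_const_mul_self c id _)

variable [NormedSpace ℝ E]

def kernelDiff (f : ℝ → E) (x h : ℝ) : E :=
  (64 : ℝ) • secondDiff f x h - (20 : ℝ) • secondDiff f x (2 * h) + secondDiff f x (4 * h)

theorem HasDerivAt.isLittleO_secondDiff {f : ℝ → E} {f' : E} {x : ℝ} (hf : HasDerivAt f f' x) :
    secondDiff f x =o[𝓝 0] id := by
  have hplus := hasDerivAt_iff_isLittleO_nhds_zero.mp hf
  have hminus := ((hplus.comp_tendsto (continuous_neg.tendsto' 0 0 neg_zero)).neg_right).congr_right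
    fun h => neg_neg h
  refine (hplus.add hminus).congr_left fun h => ?_
  simp only [Function.comp_apply, secondDiff, neg_smul, ← sub_eq_add_neg, two_smul]
  abel

theorem HasDerivAt.isLittleO_kernelDiff {f : ℝ → E} {f' : E} {x : ℝ} (hf : HasDerivAt f f' x) :
    kernelDiff f x =o[𝓝 0] id := by
  have hΔ := hf.isLittleO_secondDiff
  exact ((hΔ.const_smul_left 64).sub ((hΔ.comp_const_mul 2).const_smul_left 20)).add
    (hΔ.comp_const_mul 4)

theorem HasSum.kernelDiff {ι : Type*} {F : ι → ℝ → E} {f : ℝ → E}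
    (hF : ∀ y, HasSum (fun i => F i y) (f y)) (x h : ℝ) :
    HasSum (fun i => kernelDiff (F i) x h) (kernelDiff f x h) :=
  (((HasSum.secondDiff hF x h).const_smul _).sub
    ((HasSum.secondDiff hF x (2 * h)).const_smul _)).add (HasSum.secondDiff hF x (4 * h))

end SecondDifference

noncomputable def diffKernel (θ : ℝ) : ℝ := 8 * (cos θ - 1) ^ 3 * (cos θ + 3)

theorem diffKernel_nonpos (θ : ℝ) : diffKernel θ ≤ 0 := by
  have hc : 0 ≤ 1 - cos θ := sub_nonneg.mpr (cos_le_one θ)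
  have hc' : 0 ≤ cos θ + 3 := by linarith [neg_one_le_cos θ]
  have : diffKernel θ = -(8 * (1 - cos θ) ^ 3 * (cos θ + 3)) := by rw [diffKernel]; ring
  rw [this, neg_nonpos]
  positivity

theorem abs_diffKernel_le (θ : ℝ) : |diffKernel θ| ≤ 4 * θ ^ 6 := by
  have hc : 0 ≤ 1 - cos θ := sub_nonneg.mpr (cos_le_one θ)
  have hc' : 1 - cos θ ≤ θ ^ 2 / 2 := by linarith [one_sub_sq_div_two_le_cos (x := θ)]
  have h3 : cos θ + 3 ≤ 4 := by linarith [cos_le_one θ]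
  rw [abs_of_nonpos (diffKernel_nonpos θ), diffKernel]
  calc -(8 * (cos θ - 1) ^ 3 * (cos θ + 3)) = 8 * (1 - cos θ) ^ 3 * (cos θ + 3) := by ring
    _ ≤ 8 * (θ ^ 2 / 2) ^ 3 * 4 := by gcongr; linarith [neg_one_le_cos θ]
    _ = 4 * θ ^ 6 := by ring

theorem diffKernel_pi : diffKernel π = -128 := by norm_num [diffKernel]

theorem diffKernel_pi_div_two : diffKernel (π / 2) = -24 := by norm_num [diffKernel]

theorem diffKernel_nat_mul_two_pi (j : ℕ) : diffKernel (j * (2 * π)) = 0 := by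
  simp [diffKernel, cos_nat_mul_two_pi]

theorem secondDiff_cos_mul_div (a b x h : ℝ) :
    secondDiff (fun y => cos (a * y) / b) x h = 2 * cos (a * x) * (cos (a * h) - 1) / b := by
  simp only [secondDiff, mul_add, mul_sub, cos_add, cos_sub, nsmul_eq_mul]
  push_cast
  ring

theorem kernelDiff_cos_mul_div (a b x h : ℝ) :
    kernelDiff (fun y => cos (a * y) / b) x h = 2 * cos (a * x) * diffKernel (a * h) / b := by
  have h2 : cos (a * (2 * h)) = 2 * cos (a * h) ^ 2 - 1 := by rw [mul_left_comm, cos_two_mul]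
  have h4 : cos (a * (4 * h)) = 2 * (2 * cos (a * h) ^ 2 - 1) ^ 2 - 1 := by
    rw [show a * (4 * h) = 2 * (a * (2 * h)) by ring, cos_two_mul, h2]
  simp only [kernelDiff, secondDiff_cos_mul_div, h2, h4, diffKernel, smul_eq_mul]
  ring

theorem abs_two_mul_cos_mul_diffKernel_div_le {a : ℝ} (ha : 0 < a) (x h : ℝ) :
    |2 * cos (a * x) * diffKernel (a * h) / a| ≤ 8 * a ^ 5 * h ^ 6 := by
  rw [abs_div, abs_mul, abs_mul, abs_two, abs_of_pos ha, div_le_iff₀ ha]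
  calc 2 * |cos (a * x)| * |diffKernel (a * h)| ≤ 2 * 1 * (4 * (a * h) ^ 6) := by
        gcongr
        exacts [abs_cos_le_one _, abs_diffKernel_le _]
    _ = 8 * a ^ 5 * h ^ 6 * a := by ring

theorem half_le_abs_cos_or_abs_cos_two_mul (θ : ℝ) : 1 / 2 ≤ |cos θ| ∨ 1 / 2 ≤ |cos (2 * θ)| := by
  by_contra! h
  obtain ⟨h1, h2⟩ := h
  rw [cos_two_mul] at h2
  have : cos θ ^ 2 < 1 / 4 := by nlinarith [sq_abs (cos θ), abs_nonneg (cos θ)]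
  rw [abs_lt] at h2
  linarith [h2.1]

theorem sum_range_pow_succ_le {r : ℝ} (hr : 1 < r) (k : ℕ) :
    ∑ n ∈ Finset.range k, r ^ (n + 1) ≤ r ^ (k + 1) / (r - 1) := by
  have hgeom := geom_sum_mul_of_one_le hr.le k
  simp_rw [pow_succ' r, ← Finset.mul_sum]
  rw [le_div_iff₀ (sub_pos.mpr hr), mul_assoc, hgeom]
  linarith

noncomputable def weierstrass (ξ : ℝ) : ℝ := ∑' n : ℕ, cos ((2:ℝ) ^ (n + 1) * ξ) / (2:ℝ) ^ (n + 1)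

theorem hasSum_weierstrass (ξ : ℝ) :
    HasSum (fun n : ℕ => cos ((2:ℝ) ^ (n + 1) * ξ) / (2:ℝ) ^ (n + 1)) (weierstrass ξ) := by
  refine (summable_geometric_two.of_norm_bounded fun n => ?_).hasSum
  calc ‖cos ((2:ℝ) ^ (n + 1) * ξ) / (2:ℝ) ^ (n + 1)‖ = |cos ((2:ℝ) ^ (n + 1) * ξ)| / 2 ^ (n + 1) := by
        rw [norm_div, norm_pow, Real.norm_two, Real.norm_eq_abs]
    _ ≤ 1 / 2 ^ n := by
        gcongr
        exacts [abs_cos_le_one _, one_le_two, n.le_succ]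
    _ = (1 / 2) ^ n := (one_div_pow 2 n).symm

noncomputable def weierstrassKernelTerm (x h : ℝ) (n : ℕ) : ℝ :=
  2 * cos (2 ^ (n + 1) * x) * diffKernel (2 ^ (n + 1) * h) / 2 ^ (n + 1)

theorem hasSum_kernelDiff_weierstrass (x h : ℝ) :
    HasSum (weierstrassKernelTerm x h) (kernelDiff weierstrass x h) := by
  have hsum := HasSum.kernelDiff hasSum_weierstrass x h
  simp only [kernelDiff_cos_mul_div] at hsum
  exact hsum

theorem kernelDiff_weierstrass_dyadic (x : ℝ) (k : ℕ) :
    kernelDiff weierstrass x (π / 2 ^ (k + 2)) =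
      (∑ n ∈ Finset.range k, weierstrassKernelTerm x (π / 2 ^ (k + 2)) n)
      - 48 * cos (2 ^ (k + 1) * x) / 2 ^ (k + 1) - 256 * cos (2 ^ (k + 2) * x) / 2 ^ (k + 2) := by
  have hvanish : ∀ n ∉ Finset.range (k + 2), weierstrassKernelTerm x (π / 2 ^ (k + 2)) n = 0 := by
    intro n hn
    obtain ⟨j, rfl⟩ := Nat.exists_eq_add_of_le (not_lt.mp (Finset.mem_range.not.mp hn))
    have : (2:ℝ) ^ (k + 2 + j + 1) * (π / 2 ^ (k + 2)) = (2 ^ j : ℕ) * (2 * π) := by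
      push_cast; field_simp; ring
    rw [weierstrassKernelTerm, this, diffKernel_nat_mul_two_pi, mul_zero, zero_div]
  have hπ : (2:ℝ) ^ (k + 1 + 1) * (π / 2 ^ (k + 2)) = π := by field_simp
  have hπ2 : (2:ℝ) ^ (k + 1) * (π / 2 ^ (k + 2)) = π / 2 := by field_simp; ring
  rw [(hasSum_kernelDiff_weierstrass x _).unique (hasSum_sum_of_ne_finset_zero hvanish),
    Finset.sum_range_succ, Finset.sum_range_succ, weierstrassKernelTerm, weierstrassKernelTerm, hπ,
    hπ2, diffKernel_pi, diffKernel_pi_div_two]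
  ring

theorem abs_sum_range_weierstrassKernelTerm_le (x : ℝ) (k : ℕ) :
    |∑ n ∈ Finset.range k, weierstrassKernelTerm x (π / 2 ^ (k + 2)) n| ≤ 8 / 2 ^ (k + 2) := by
  have hT6 : ((2:ℝ) ^ (k + 2)) ^ 6 = 2 ^ (k + 2) * 32 ^ (k + 2) := by
    rw [pow_succ' _ 5, ← pow_mul, mul_comm (k + 2) 5, pow_mul]
    norm_num
  have hπ6 : π ^ 6 ≤ 992 := by nlinarith [pow_le_pow_left₀ pi_pos.le pi_lt_d2.le 6]
  calc _ ≤ ∑ n ∈ Finset.range k, 8 * ((2:ℝ) ^ (n + 1)) ^ 5 * (π / 2 ^ (k + 2)) ^ 6 :=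
        (Finset.abs_sum_le_sum_abs _ _).trans
          (Finset.sum_le_sum fun n _ => abs_two_mul_cos_mul_diffKernel_div_le (by positivity) _ _)
    _ = 8 * (π / 2 ^ (k + 2)) ^ 6 * ∑ n ∈ Finset.range k, (32:ℝ) ^ (n + 1) := by
        rw [Finset.mul_sum]
        refine Finset.sum_congr rfl fun n _ => ?_
        rw [← pow_mul, mul_comm (n + 1) 5, pow_mul]
        ring
    _ ≤ 8 * (π / 2 ^ (k + 2)) ^ 6 * (32 ^ (k + 1) / (32 - 1)) := by
        gcongr
        exact sum_range_pow_succ_le (by norm_num) k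
    _ = π ^ 6 / 124 / 2 ^ (k + 2) := by
        rw [div_pow, hT6]
        field_simp
        ring
    _ ≤ 8 / 2 ^ (k + 2) := by gcongr; linarith

theorem kernelDiff_weierstrass_dyadic_lower (x : ℝ) (k : ℕ) :
    256 * |cos (2 ^ (k + 2) * x)| - 104 ≤
      2 ^ (k + 2) * |kernelDiff weierstrass x (π / 2 ^ (k + 2))| := by
  rw [kernelDiff_weierstrass_dyadic]
  set S := ∑ n ∈ Finset.range k, weierstrassKernelTerm x (π / 2 ^ (k + 2)) n
  set A := 48 * cos (2 ^ (k + 1) * x) / 2 ^ (k + 1)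
  set B := 256 * cos (2 ^ (k + 2) * x) / 2 ^ (k + 2)
  have hT : (0:ℝ) < 2 ^ (k + 2) := by positivity
  have hS : 2 ^ (k + 2) * |S| ≤ 8 := by
    rw [← le_div_iff₀' hT]
    exact abs_sum_range_weierstrassKernelTerm_le x k
  have hA : 2 ^ (k + 2) * |A| ≤ 96 := by
    rw [abs_div, abs_mul, abs_of_pos (by norm_num : (0:ℝ) < 48),
      abs_of_pos (by positivity : (0:ℝ) < 2 ^ (k + 1)), pow_succ _ (k + 1)]
    field_simp
    linarith [abs_cos_le_one (2 ^ (k + 1) * x)]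
  have hB : 2 ^ (k + 2) * |B| = 256 * |cos (2 ^ (k + 2) * x)| := by
    rw [abs_div, abs_mul, abs_of_pos hT, abs_of_pos (by norm_num : (0:ℝ) < 256)]
    field_simp
  have htriangle : |B| ≤ |S| + |A| + |S - A - B| :=
    calc |B| = |(S - A) - (S - A - B)| := by rw [sub_sub_cancel]
      _ ≤ |S - A| + |S - A - B| := abs_sub _ _
      _ ≤ |S| + |A| + |S - A - B| := by gcongr; exact abs_sub _ _
  linarith [mul_le_mul_of_nonneg_left htriangle hT.le]

theorem exists_half_le_abs_cos_two_pow_mul (x : ℝ) (K : ℕ) :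
    ∃ k ≥ K, 1 / 2 ≤ |cos (2 ^ (k + 2) * x)| := by
  rcases half_le_abs_cos_or_abs_cos_two_mul (2 ^ (K + 2) * x) with h | h
  · exact ⟨K, le_rfl, h⟩
  · exact ⟨K + 1, K.le_succ, by rwa [← mul_assoc, ← pow_succ'] at h⟩

/-- The Weierstrass function `g ξ = Σ_{n=1}^∞ 2⁻ⁿ cos (2ⁿ ξ)` is nowhere differentiable. -/
theorem weierstrass_function_nowhere_differentiable
    (g : ℝ → ℝ)
    (hg : g = fun ξ => ∑' n : ℕ, Real.cos ((2:ℝ) ^ (n + 1) * ξ) / (2:ℝ) ^ (n + 1)) :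
    ∀ ξ : ℝ, ¬ DifferentiableAt ℝ g ξ := by
  subst hg
  intro x hx
  have hsmall := (show DifferentiableAt ℝ weierstrass x from hx).hasDerivAt.isLittleO_kernelDiff
  have hdyadic : Tendsto (fun k : ℕ => π / 2 ^ (k + 2)) atTop (𝓝 0) :=
    tendsto_const_nhds.div_atTop
      ((tendsto_pow_atTop_atTop_of_one_lt one_lt_two).comp (tendsto_add_atTop_nat 2))
  obtain ⟨K, hK⟩ := (hdyadic.eventually (hsmall.def one_pos)).exists_forall_of_atTop
  obtain ⟨k, hkK, hcos⟩ := exists_half_le_abs_cos_two_pow_mul x K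
  have hupper : 2 ^ (k + 2) * |kernelDiff weierstrass x (π / 2 ^ (k + 2))| ≤ π := by
    have := hK k hkK
    simp only [Real.norm_eq_abs, one_mul, id] at this
    rwa [abs_of_pos (by positivity : 0 < π / 2 ^ (k + 2)), le_div_iff₀' (by positivity)] at this
  linarith [kernelDiff_weierstrass_dyadic_lower x k, pi_lt_four]
end
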